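/- In the simplicial setup, let Γ = {b₁, …, b_t} with b₁ ≺ ⋯ ≺ b_t be an equivalence class of B_A. Then for every b ∈ Γ + A there exists a unique monomial x^μ y^ν ∈ M_Γ such that b = Σ_{i=1}^c μ_[i]·a_i + Σ_{i=1}^d ν_[i]·e_i. -/

import Mathlib

namespace SimplicialToric

/-- `eVec d α i` is `α` times the `i`-th standard basis vector of `ℕ^d`. -/
def eVec (d α : ℕ) (i : Fin d) : Fin d → ℕ := fun j => if j = i then α else 0

/-- The Hilbert basis of a submonoid `B ⊆ ℕ^d`: the set of irreducible elements
(in `ℕ^d` the only unit is `0`). -/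
def Hilb {d : ℕ} (B : AddSubmonoid (Fin d → ℕ)) : Set (Fin d → ℕ) :=
  {b | b ∈ B ∧ b ≠ 0 ∧ ∀ x ∈ B, ∀ y ∈ B, b = x + y → x = 0 ∨ y = 0}

/-- The submonoid `A = Σᵢ ℤ≥0·eᵢ = αℤ≥0^d`. -/
def Amon (d α : ℕ) : AddSubmonoid (Fin d → ℕ) :=
  AddSubmonoid.closure (Set.range (eVec d α))

/-- `B_A = {x ∈ B : x − a ∉ B for every a ∈ A \ {0}}`. -/
def BA {d : ℕ} (B : AddSubmonoid (Fin d → ℕ)) (α : ℕ) : Set (Fin d → ℕ) :=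
  {x | x ∈ B ∧ ∀ z ∈ Amon d α, z ≠ 0 → ∀ y ∈ B, x ≠ y + z}

/-- The generators `a₁,…,a_c,e₁,…,e_d` of `B`, indexed by the variables of
`S = K[x₁,…,x_c,y₁,…,y_d]`; variable `Fin.castAdd d i` is `xᵢ`, variable
`Fin.natAdd c j` is `yⱼ`. -/
def gens (c d α : ℕ) (a : Fin c → Fin d → ℕ) : Fin (c + d) → Fin d → ℕ :=
  Fin.addCases a (eVec d α)

/-- The element of `B` represented by the monomial with exponent vector `σ`:
`π(x^μ y^ν) = t^(valE σ)`. -/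
def valE (c d α : ℕ) (a : Fin c → Fin d → ℕ) (σ : Fin (c + d) →₀ ℕ) : Fin d → ℕ :=
  ∑ v : Fin (c + d), σ v • gens c d α a v

/-- total degree of a monomial (exponent vector). -/
def degE {N : ℕ} (σ : Fin N →₀ ℕ) : ℕ := ∑ v, σ v

/-- the graded reverse lexicographic order: `grevlex σ τ` means `σ ≺ τ`,
i.e. `deg σ < deg τ`, or degrees agree and the last nonzero entry of `τ − σ`
is negative. -/
def grevlex {N : ℕ} (σ τ : Fin N →₀ ℕ) : Prop :=
  degE σ < degE τ ∨ (degE σ = degE τ ∧ ∃ k, τ k < σ k ∧ ∀ l, k < l → σ l = τ l)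

/-- `x ∼ y` iff `x − y ∈ gp(A) = αℤ^d`. -/
def Rel {d : ℕ} (α : ℕ) (x y : Fin d → ℕ) : Prop :=
  ∀ j, (α : ℤ) ∣ (x j : ℤ) - (y j : ℤ)

/-- `Γ` is an equivalence class of `B_A` modulo `αℤ^d`. -/
def IsClass {d : ℕ} (B : AddSubmonoid (Fin d → ℕ)) (α : ℕ) (Γ : Set (Fin d → ℕ)) : Prop :=
  ∃ x ∈ BA B α, Γ = {y | y ∈ BA B α ∧ Rel α x y}

/-- the total order on an equivalence class of `B_A`: `b ≺ c` iff the last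
nonzero entry of `b − c` is negative. -/
def ltCls {d : ℕ} (x y : Fin d → ℕ) : Prop :=
  ∃ k, x k < y k ∧ ∀ l, k < l → x l = y l

/-- `joinSub x y = x∨y − y`, where `x∨y` is the componentwise maximum. -/
def joinSub {d : ℕ} (x y : Fin d → ℕ) : Fin d → ℕ := fun j => max (x j) (y j) - y j

/-- the monomial with exponents `σ` lies in `T = K[y₁,…,y_d]`. -/
def yOnly (c d : ℕ) (σ : Fin (c + d) →₀ ℕ) : Prop := ∀ i : Fin c, σ (Fin.castAdd d i) = 0

/-- the monomial with exponents `σ` involves only the `x`-variables. -/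
def xOnly (c d : ℕ) (σ : Fin (c + d) →₀ ℕ) : Prop := ∀ j : Fin d, σ (Fin.natAdd c j) = 0

/-- the set `N₁`, for a given choice `m` of the minimal monomials `m_b`. -/
def N1set (c d α : ℕ) (a : Fin c → Fin d → ℕ) (B : AddSubmonoid (Fin d → ℕ))
    (m : (Fin d → ℕ) → (Fin (c + d) →₀ ℕ)) : Set (Fin (c + d) →₀ ℕ) :=
  {n | ∃ (i : Fin c) (b : Fin d → ℕ), b ∈ BA B α ∧
    n = Finsupp.single (Fin.castAdd d i) 1 + m b ∧ n ≠ m (a i + b)}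

/-- the set `N₂ = ∪_Γ N_Γ`, where `N_Γ = {n(bᵢ,bⱼ) = m_{bⱼ}·m_{bᵢ∨bⱼ−bⱼ} : bᵢ ≺ bⱼ in Γ}`. -/
def N2set {d : ℕ} (c α : ℕ) (B : AddSubmonoid (Fin d → ℕ))
    (m : (Fin d → ℕ) → (Fin (c + d) →₀ ℕ)) : Set (Fin (c + d) →₀ ℕ) :=
  {n | ∃ Γ, IsClass B α Γ ∧ ∃ bi ∈ Γ, ∃ bj ∈ Γ, ltCls bi bj ∧ n = m bj + m (joinSub bi bj)}

/-- `σ` is the exponent vector of the initial (i.e. `≺`-largest) term of `f`. -/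
def IsLeadMon {N : ℕ} {K : Type*} [Field K] (f : MvPolynomial (Fin N) K)
    (σ : Fin N →₀ ℕ) : Prop :=
  σ ∈ f.support ∧ ∀ τ ∈ f.support, τ = σ ∨ grevlex τ σ

/-- the initial ideal of `I` with respect to the graded reverse lexicographic order. -/
noncomputable def initialIdeal {N : ℕ} {K : Type*} [Field K] (I : Ideal (MvPolynomial (Fin N) K)) :
    Ideal (MvPolynomial (Fin N) K) :=
  Ideal.span {g | ∃ f ∈ I, ∃ σ, IsLeadMon f σ ∧ g = MvPolynomial.monomial σ (1 : K)}

end SimplicialToric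

open SimplicialToric

namespace SimplicialToric

/-- For an equivalence class \`Γ\` of \`B_A\` the set
\`M_Γ = ∪_{b ∈ Γ} (m_b·M_T \ ∪_{b' ≺ b in Γ} n(b',b)·M_T)\`. -/
def MGamma (c d α : ℕ) (m : (Fin d → ℕ) → (Fin (c + d) →₀ ℕ)) (Γ : Set (Fin d → ℕ)) :
    Set (Fin (c + d) →₀ ℕ) :=
  {σ | ∃ b ∈ Γ, (∃ τ, yOnly c d τ ∧ σ = m b + τ) ∧
    ∀ b' ∈ Γ, ltCls b' b → ¬ ∃ τ, yOnly c d τ ∧ σ = (m b + m (joinSub b' b)) + τ}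

end SimplicialToric

/-!
For `b = g₀ + αw₀ ∈ Γ + A`, the representatives of `b` of the form `m_g y^w` (`g ∈ Γ`) are those
with `b = g + αw`, i.e. with `g` in the finite set `S_b = {g ∈ Γ : g ≤ b}`. Elements of `Γ` are
congruent modulo `α`, so `g' ∨ g − g = αu` lies in `A`; since every `aᵢ` has degree `α`, the
grevlex-minimal monomial of an element `αu` of `A` is the pure `y`-monomial `y^u`, hence
`n(g', g) = m_g y^u`, which divides `m_g y^w` iff `u ≤ w` iff `g' ≤ b`. Thus `m_g y^w ∈ M_Γ` iff
`g` is `≺`-minimal in `S_b`; as `≺` is a total order, `S_b` has exactly one minimal element, and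
`w` is then determined by `b = g + αw`.
-/

namespace SimplicialToric

section ClassOrder

/-- `ltCls` is the lexicographic order read from the last coordinate backwards. -/
def revLex {n : ℕ} (x : Fin n → ℕ) : Lex ((Fin n)ᵒᵈ → ℕ) := toLex (x ∘ OrderDual.ofDual)

variable {n : ℕ}

lemma ltCls_iff_revLex_lt {x y : Fin n → ℕ} : ltCls x y ↔ revLex x < revLex y := by
  constructor
  · rintro ⟨k, hk, h⟩
    exact ⟨OrderDual.toDual k, fun j hj => h (OrderDual.ofDual j) hj, hk⟩
  · rintro ⟨k, h, hk⟩
    exact ⟨OrderDual.ofDual k, hk, fun l hl => h (OrderDual.toDual l) hl⟩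

lemma revLex_injective : Function.Injective (revLex (n := n)) := fun x y h => by
  funext i
  exact congrFun (congrArg ofLex h) (OrderDual.toDual i)

lemma ltCls_asymm {x y : Fin n → ℕ} (h : ltCls x y) : ¬ ltCls y x := by
  rw [ltCls_iff_revLex_lt] at h ⊢
  exact h.asymm

lemma ltCls_or_ltCls_of_ne {x y : Fin n → ℕ} (h : x ≠ y) : ltCls x y ∨ ltCls y x := by
  simp only [ltCls_iff_revLex_lt]
  exact lt_or_gt_of_ne (revLex_injective.ne h)

lemma exists_ltCls_minimal {S : Set (Fin n → ℕ)} (hS : S.Finite) (hne : S.Nonempty) :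
    ∃ g ∈ S, ∀ g' ∈ S, ¬ ltCls g' g := by
  obtain ⟨g, hg, hmin⟩ := S.exists_min_image revLex hS hne
  exact ⟨g, hg, fun g' hg' hlt => (ltCls_iff_revLex_lt.1 hlt).not_ge (hmin g' hg')⟩

lemma eq_of_ltCls_minimal {S : Set (Fin n → ℕ)} {g g' : Fin n → ℕ} (hg : g ∈ S) (hg' : g' ∈ S)
    (hmin : ∀ x ∈ S, ¬ ltCls x g) (hmin' : ∀ x ∈ S, ¬ ltCls x g') : g = g' := by
  by_contra hne
  rcases ltCls_or_ltCls_of_ne hne with h | h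
  exacts [hmin' g hg h, hmin g' hg' h]

lemma grevlex_iff {σ τ : Fin n →₀ ℕ} :
    grevlex σ τ ↔ degE σ < degE τ ∨ degE σ = degE τ ∧ ltCls ⇑τ ⇑σ := by
  simp only [grevlex, ltCls, eq_comm (a := σ _)]

lemma grevlex_asymm {σ τ : Fin n →₀ ℕ} (h : grevlex σ τ) : ¬ grevlex τ σ := by
  rw [grevlex_iff] at h ⊢
  rintro (h' | ⟨h', hlt'⟩)
  · rcases h with h | ⟨h, -⟩ <;> omega
  · rcases h with h | ⟨-, hlt⟩
    exacts [by omega, ltCls_asymm hlt hlt']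

end ClassOrder

section Monomials

variable {c d α : ℕ}

/-- The exponent vector of the monomial `y^w ∈ T`. -/
noncomputable def yMon (c : ℕ) {d : ℕ} (w : Fin d → ℕ) : Fin (c + d) →₀ ℕ :=
  Finsupp.equivFunOnFinite.symm (Fin.addCases (fun _ => 0) w)

@[simp] lemma yMon_castAdd (w : Fin d → ℕ) (i : Fin c) : yMon c w (Fin.castAdd d i) = 0 := by
  simp [yMon]

@[simp] lemma yMon_natAdd (w : Fin d → ℕ) (j : Fin d) : yMon c w (Fin.natAdd c j) = w j := by
  simp [yMon]

lemma yMon_add (w₁ w₂ : Fin d → ℕ) : yMon c (w₁ + w₂) = yMon c w₁ + yMon c w₂ := by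
  ext v
  induction v using Fin.addCases <;> simp

lemma yOnly_iff_exists_eq_yMon {τ : Fin (c + d) →₀ ℕ} : yOnly c d τ ↔ ∃ w, τ = yMon c w := by
  refine ⟨fun h => ⟨fun j => τ (Fin.natAdd c j), ?_⟩, ?_⟩
  · ext v
    induction v using Fin.addCases with
    | left i => simpa using h i
    | right j => simp
  · rintro ⟨w, rfl⟩ i
    exact yMon_castAdd w i

lemma exists_yOnly_yMon_eq_add_iff {u w : Fin d → ℕ} :
    (∃ τ, yOnly c d τ ∧ yMon c w = yMon c u + τ) ↔ u ≤ w := by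
  simp only [yOnly_iff_exists_eq_yMon]
  constructor
  · rintro ⟨_, ⟨v, rfl⟩, h⟩ j
    have := DFunLike.congr_fun h (Fin.natAdd c j)
    simp only [← yMon_add, yMon_natAdd] at this
    exact this ▸ Nat.le_add_right _ _
  · intro h
    exact ⟨_, ⟨w - u, rfl⟩, by rw [← yMon_add, add_tsub_cancel_of_le h]⟩

lemma degE_eq_sum_add_sum (σ : Fin (c + d) →₀ ℕ) :
    degE σ = ∑ i, σ (Fin.castAdd d i) + ∑ j, σ (Fin.natAdd c j) :=
  Fin.sum_univ_add _

lemma degE_yMon (w : Fin d → ℕ) : degE (yMon c w) = ∑ j, w j := by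
  simp [degE_eq_sum_add_sum]

variable (a : Fin c → Fin d → ℕ)

lemma valE_add (σ τ : Fin (c + d) →₀ ℕ) :
    valE c d α a (σ + τ) = valE c d α a σ + valE c d α a τ := by
  simp only [valE, Finsupp.coe_add, Pi.add_apply, add_smul, Finset.sum_add_distrib]

lemma valE_apply (σ : Fin (c + d) →₀ ℕ) (j : Fin d) :
    valE c d α a σ j = ∑ i, σ (Fin.castAdd d i) * a i j + α * σ (Fin.natAdd c j) := by
  simp only [valE, Finset.sum_apply, Fin.sum_univ_add, Pi.smul_apply, smul_eq_mul, gens,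
    Fin.addCases_left, Fin.addCases_right, eVec, mul_ite, mul_zero, Finset.sum_ite_eq,
    Finset.mem_univ, if_true, mul_comm α]

lemma valE_yMon (w : Fin d → ℕ) : valE c d α a (yMon c w) = α • w := by
  funext j
  simp [valE_apply]

variable {a}

lemma sum_valE_eq_mul_degE (hdeg : ∀ i, ∑ j, a i j = α) (σ : Fin (c + d) →₀ ℕ) :
    ∑ j, valE c d α a σ j = α * degE σ := by
  simp only [valE_apply, Finset.sum_add_distrib, ← Finset.mul_sum, degE_eq_sum_add_sum, mul_add]
  rw [Finset.sum_comm]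
  simp only [← Finset.mul_sum, hdeg, mul_comm α, Finset.sum_mul]

lemma grevlex_yMon_of_valE_eq (hα : 0 < α) (hdeg : ∀ i, ∑ j, a i j = α) {u : Fin d → ℕ}
    {σ : Fin (c + d) →₀ ℕ} (hσ : valE c d α a σ = α • u) (hne : σ ≠ yMon c u) :
    grevlex (yMon c u) σ := by
  have hdegσ : degE σ = ∑ j, u j := by
    apply Nat.eq_of_mul_eq_mul_left hα
    rw [← sum_valE_eq_mul_degE hdeg, hσ, Finset.mul_sum]
    rfl
  refine grevlex_iff.2 (Or.inr ⟨by rw [degE_yMon, hdegσ], ?_⟩)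
  refine (ltCls_or_ltCls_of_ne fun h => hne (DFunLike.coe_injective h)).resolve_right ?_
  -- At the last variable where `σ` would exceed `y^u`, an `xᵢ` would make `deg σ` too large
  -- and a `yⱼ` would make the `j`-th entry of `valE σ` exceed `αuⱼ`.
  rintro ⟨k, hk, hlast⟩
  induction k using Fin.addCases with
  | left i =>
    have hy : ∑ j, σ (Fin.natAdd c j) = ∑ j, u j := Finset.sum_congr rfl fun j _ => by
      simpa using (hlast (Fin.natAdd c j) (by simp [Fin.lt_def]; omega)).symm
    have hx := Finset.single_le_sum (f := fun i => σ (Fin.castAdd d i))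
      (fun _ _ => Nat.zero_le _) (Finset.mem_univ i)
    simp only [yMon_castAdd] at hk
    rw [degE_eq_sum_add_sum, hy] at hdegσ
    omega
  | right j =>
    have hj := congrFun hσ j
    rw [valE_apply, Pi.smul_apply, smul_eq_mul] at hj
    rw [yMon_natAdd] at hk
    have := (Nat.mul_lt_mul_left hα).2 hk
    omega

end Monomials

section MonoidA

variable {d α : ℕ}

lemma exists_eq_smul_of_dvd {v : Fin d → ℕ} (h : ∀ j, α ∣ v j) : ∃ u, v = α • u :=
  ⟨fun j => v j / α, funext fun j => (Nat.mul_div_cancel' (h j)).symm⟩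

lemma mem_Amon_iff {z : Fin d → ℕ} : z ∈ Amon d α ↔ ∃ w, z = α • w := by
  constructor
  · intro hz
    induction hz using AddSubmonoid.closure_induction with
    | mem x hx =>
      obtain ⟨i, rfl⟩ := hx
      exact ⟨fun j => if j = i then 1 else 0, funext fun j => by simp [eVec]⟩
    | zero => exact ⟨0, (smul_zero α).symm⟩
    | add x y _ _ hx hy =>
      obtain ⟨w₁, rfl⟩ := hx
      obtain ⟨w₂, rfl⟩ := hy
      exact ⟨w₁ + w₂, (smul_add α w₁ w₂).symm⟩
  · rintro ⟨w, rfl⟩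
    have : α • w = ∑ i, w i • eVec d α i := funext fun j => by
      simp [Finset.sum_apply, eVec, mul_comm]
    rw [this]
    exact AddSubmonoid.sum_mem _ fun i _ =>
      nsmul_mem (AddSubmonoid.subset_closure (Set.mem_range_self i)) _

lemma exists_eq_add_smul_of_modEq {x y : Fin d → ℕ} (h : ∀ j, x j ≡ y j [MOD α]) (hle : x ≤ y) :
    ∃ w, y = x + α • w := by
  obtain ⟨w, hw⟩ :=
    exists_eq_smul_of_dvd (v := y - x) fun j => (Nat.modEq_iff_dvd' (hle j)).1 (h j)
  exact ⟨w, by rw [← hw, add_tsub_cancel_of_le hle]⟩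

lemma exists_joinSub_eq_smul {x y : Fin d → ℕ} (h : ∀ j, x j ≡ y j [MOD α]) :
    ∃ u, joinSub x y = α • u := by
  refine exists_eq_smul_of_dvd fun j => ?_
  rcases le_total (x j) (y j) with hle | hle
  · rw [joinSub, max_eq_right hle, Nat.sub_self]
    exact dvd_zero α
  · rw [joinSub, max_eq_left hle]
    exact (Nat.modEq_iff_dvd' hle).1 (h j).symm

lemma le_add_smul_iff_of_joinSub_eq (hα : 0 < α) {g' g u w : Fin d → ℕ}
    (hu : joinSub g' g = α • u) : g' ≤ g + α • w ↔ u ≤ w := by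
  refine forall_congr' fun j => ?_
  have hj := congrFun hu j
  simp only [joinSub, Pi.smul_apply, smul_eq_mul] at hj
  refine Iff.trans ?_ (Nat.mul_le_mul_left_iff hα)
  simp only [Pi.add_apply, Pi.smul_apply, smul_eq_mul]
  omega

variable {B : AddSubmonoid (Fin d → ℕ)} {Γ : Set (Fin d → ℕ)}

lemma IsClass.mem (hΓ : IsClass B α Γ) {x : Fin d → ℕ} (hx : x ∈ Γ) : x ∈ B := by
  obtain ⟨_, -, rfl⟩ := hΓ
  exact hx.1.1

lemma IsClass.modEq (hΓ : IsClass B α Γ) {x y : Fin d → ℕ} (hx : x ∈ Γ) (hy : y ∈ Γ) (j : Fin d) :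
    x j ≡ y j [MOD α] := by
  obtain ⟨_, -, rfl⟩ := hΓ
  exact (Nat.modEq_iff_dvd.2 (hx.2 j)).trans (Nat.modEq_iff_dvd.2 (hy.2 j)).symm

end MonoidA

section MinimalMonomials

variable {c d α : ℕ} {a : Fin c → Fin d → ℕ} {B : AddSubmonoid (Fin d → ℕ)}
  {m : (Fin d → ℕ) → (Fin (c + d) →₀ ℕ)}

structure IsGrevlexMinRepr (c d α : ℕ) (a : Fin c → Fin d → ℕ) (B : AddSubmonoid (Fin d → ℕ))
    (m : (Fin d → ℕ) → (Fin (c + d) →₀ ℕ)) : Prop where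
  valE_eq : ∀ b ∈ B, valE c d α a (m b) = b
  minimal : ∀ b ∈ B, ∀ σ, valE c d α a σ = b → m b = σ ∨ grevlex (m b) σ

lemma IsGrevlexMinRepr.valE_add_yMon (hm : IsGrevlexMinRepr c d α a B m) {g : Fin d → ℕ}
    (hg : g ∈ B) (w : Fin d → ℕ) : valE c d α a (m g + yMon c w) = g + α • w := by
  rw [valE_add, hm.valE_eq g hg, valE_yMon]

lemma IsGrevlexMinRepr.apply_smul (hm : IsGrevlexMinRepr c d α a B m) (hα : 0 < α)
    (hdeg : ∀ i, ∑ j, a i j = α) (hAB : Amon d α ≤ B) (u : Fin d → ℕ) :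
    m (α • u) = yMon c u := by
  have hmem : α • u ∈ B := hAB (mem_Amon_iff.2 ⟨u, rfl⟩)
  by_contra hne
  have hlt := grevlex_yMon_of_valE_eq hα hdeg (hm.valE_eq _ hmem) hne
  rcases hm.minimal _ hmem (yMon c u) (valE_yMon a u) with h | h
  exacts [hne h, grevlex_asymm h hlt]

/-- `n(g', g) = m_g y^u` with `αu = g' ∨ g − g`, so it divides `m_g y^w` iff `g' ≤ g + αw`. -/
lemma IsGrevlexMinRepr.exists_yOnly_eq_add_iff_le (hm : IsGrevlexMinRepr c d α a B m)
    (hα : 0 < α) (hdeg : ∀ i, ∑ j, a i j = α) (hAB : Amon d α ≤ B) {g' g w : Fin d → ℕ}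
    (hmod : ∀ j, g' j ≡ g j [MOD α]) :
    (∃ τ, yOnly c d τ ∧ m g + yMon c w = m g + m (joinSub g' g) + τ) ↔ g' ≤ g + α • w := by
  obtain ⟨u, hu⟩ := exists_joinSub_eq_smul hmod
  rw [le_add_smul_iff_of_joinSub_eq hα hu, hu, hm.apply_smul hα hdeg hAB,
    ← exists_yOnly_yMon_eq_add_iff (c := c)]
  simp only [add_assoc, add_right_inj]

lemma IsGrevlexMinRepr.mem_MGamma_iff (hm : IsGrevlexMinRepr c d α a B m) (hα : 0 < α)
    (hdeg : ∀ i, ∑ j, a i j = α) (hAB : Amon d α ≤ B) {Γ : Set (Fin d → ℕ)}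
    (hΓ : IsClass B α Γ) {σ : Fin (c + d) →₀ ℕ} :
    σ ∈ MGamma c d α m Γ ↔
      ∃ g ∈ Γ, ∃ w, σ = m g + yMon c w ∧ ∀ g' ∈ Γ, ltCls g' g → ¬ g' ≤ g + α • w := by
  constructor
  · rintro ⟨g, hg, ⟨τ, hτ, rfl⟩, hnot⟩
    obtain ⟨w, rfl⟩ := yOnly_iff_exists_eq_yMon.1 hτ
    exact ⟨g, hg, w, rfl, fun g' hg' hlt hle => hnot g' hg' hlt
      ((hm.exists_yOnly_eq_add_iff_le hα hdeg hAB (hΓ.modEq hg' hg)).2 hle)⟩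
  · rintro ⟨g, hg, w, rfl, hmin⟩
    exact ⟨g, hg, ⟨yMon c w, yOnly_iff_exists_eq_yMon.2 ⟨w, rfl⟩, rfl⟩, fun g' hg' hlt h =>
      hmin g' hg' hlt ((hm.exists_yOnly_eq_add_iff_le hα hdeg hAB (hΓ.modEq hg' hg)).1 h)⟩

end MinimalMonomials

end SimplicialToric

theorem MGamma_unique_repr_general
    (c d α : ℕ) (hα : 0 < α)
    (a : Fin c → Fin d → ℕ) (B : AddSubmonoid (Fin d → ℕ))
    (hBgen : B = AddSubmonoid.closure (Set.range a ∪ Set.range (eVec d α)))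
    (hdeg : ∀ i, ∑ j, a i j = α)
    (m : (Fin d → ℕ) → (Fin (c + d) →₀ ℕ))
    (hmval : ∀ b ∈ B, valE c d α a (m b) = b)
    (hmmin : ∀ b ∈ B, ∀ σ, valE c d α a σ = b → m b = σ ∨ grevlex (m b) σ)
    (Γ : Set (Fin d → ℕ)) (hΓ : IsClass B α Γ) :
    ∀ b : Fin d → ℕ, (∃ g ∈ Γ, ∃ z ∈ Amon d α, b = g + z) →
      ∃! σ : Fin (c + d) →₀ ℕ, σ ∈ MGamma c d α m Γ ∧ valE c d α a σ = b := by
  have hm : IsGrevlexMinRepr c d α a B m := ⟨hmval, hmmin⟩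
  have hAB : Amon d α ≤ B := hBgen ▸ AddSubmonoid.closure_mono Set.subset_union_right
  rintro _ ⟨g₀, hg₀, z, hz, rfl⟩
  obtain ⟨w₀, rfl⟩ := mem_Amon_iff.1 hz
  set S := {g ∈ Γ | g ≤ g₀ + α • w₀}
  have hS : S.Finite := (Set.finite_Iic _).subset fun g hg => hg.2
  obtain ⟨g, ⟨hgΓ, hgle⟩, hgmin⟩ := exists_ltCls_minimal hS ⟨g₀, hg₀, le_self_add⟩
  obtain ⟨w, hw⟩ := exists_eq_add_smul_of_modEq (y := g₀ + α • w₀) (fun j =>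
    (hΓ.modEq hgΓ hg₀ j).trans (Nat.add_mul_mod_self_left _ _ _).symm) hgle
  refine ⟨m g + yMon c w, ⟨(hm.mem_MGamma_iff hα hdeg hAB hΓ).2 ⟨g, hgΓ, w, rfl,
    fun g' hg' hlt hle => hgmin g' ⟨hg', hw ▸ hle⟩ hlt⟩,
    by rw [hm.valE_add_yMon (hΓ.mem hgΓ), hw]⟩, ?_⟩
  rintro σ ⟨hσ, hσb⟩
  obtain ⟨g₂, hg₂, w₂, rfl, hmin₂⟩ := (hm.mem_MGamma_iff hα hdeg hAB hΓ).1 hσ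
  rw [hm.valE_add_yMon (hΓ.mem hg₂)] at hσb
  obtain rfl : g₂ = g := eq_of_ltCls_minimal (S := S) ⟨hg₂, hσb ▸ le_self_add⟩ ⟨hgΓ, hgle⟩
    (fun x hx hlt => hmin₂ x hx.1 hlt (hσb ▸ hx.2)) hgmin
  obtain rfl : w₂ = w := smul_right_injective _ hα.ne' (add_left_cancel (hσb.trans hw))
  rfl

/-- For an equivalence class `Γ` of `B_A` and every `b ∈ Γ + A`,
there is a unique monomial in `M_Γ` representing `b`. -/
theorem MGamma_unique_repr
    (c d α : ℕ) (hα : 0 < α)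
    (a : Fin c → Fin d → ℕ) (B : AddSubmonoid (Fin d → ℕ))
    (hBgen : B = AddSubmonoid.closure (Set.range a ∪ Set.range (eVec d α)))
    (hhilb : Hilb B = Set.range a ∪ Set.range (eVec d α))
    (hdeg : ∀ i, ∑ j, a i j = α)
    (m : (Fin d → ℕ) → (Fin (c + d) →₀ ℕ))
    (hmval : ∀ b ∈ B, valE c d α a (m b) = b)
    (hmmin : ∀ b ∈ B, ∀ σ, valE c d α a σ = b → m b = σ ∨ grevlex (m b) σ)
    (Γ : Set (Fin d → ℕ)) (hΓ : IsClass B α Γ) :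
    ∀ b : Fin d → ℕ, (∃ g ∈ Γ, ∃ z ∈ Amon d α, b = g + z) →
      ∃! σ : Fin (c + d) →₀ ℕ, σ ∈ MGamma c d α m Γ ∧ valE c d α a σ = b :=
  MGamma_unique_repr_general c d α hα a B hBgen hdeg m hmval hmmin Γ hΓ
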